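/- arXiv:2006.10663 — 3 statements merged into one kernel-verified Lean document; each statement's English description precedes it below -/
import Mathlib

section
/- If Ω ⊂ ℝ^d is an open set admitting a tiling of ℝ^d by pairwise disjoint isometric copies Ω_j (with the complement of their union having Lebesgue measure zero), then the boundary ∂Ω has Lebesgue measure zero. -/
open MeasureTheory Real Set
open scoped ENNReal

noncomputable section

abbrev Euc (d : ℕ) := EuclideanSpace ℝ (Fin d)

/-- Membership in the Sobolev space `W₂¹(U)` (with a differentiable representative). -/
def MemH1 {d : ℕ} (U : Set (Euc d)) (f : Euc d → ℝ) : Prop :=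
  DifferentiableOn ℝ f U ∧ IntegrableOn (fun x => (f x) ^ 2) U volume ∧
    IntegrableOn (fun x => ‖fderiv ℝ f x‖ ^ 2) U volume

/-- Square of the `W₂¹(U)` norm. -/
def H1normSq {d : ℕ} (U : Set (Euc d)) (f : Euc d → ℝ) : ℝ :=
  (∫ x in U, (f x) ^ 2) + ∫ x in U, ‖fderiv ℝ f x‖ ^ 2

/-- Glazman-type counting function for the Neumann Laplacian on `U`:
the supremum of dimensions of subspaces of `W₂¹(U)` on which the Rayleigh quotient
is `< lam`. -/
def NeumannCount {d : ℕ} (U : Set (Euc d)) (lam : ℝ) : ℝ≥0∞ :=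
  ⨆ V : {V : Submodule ℝ (Euc d → ℝ) // FiniteDimensional ℝ V ∧
      (∀ f ∈ V, MemH1 U f) ∧
      ∀ f ∈ V, f ≠ 0 → (0 < ∫ x in U, (f x) ^ 2) ∧
        (∫ x in U, ‖fderiv ℝ f x‖ ^ 2) < lam * ∫ x in U, (f x) ^ 2},
    (Module.finrank ℝ V.1 : ℝ≥0∞)

/-- The open cube `(-L, L)^d`. -/
def openCube (d : ℕ) (L : ℝ) : Set (Euc d) := {x | ∀ i, -L < x i ∧ x i < L}

/-- Volume of the unit ball in `ℝ^d`. -/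
def ballVol (d : ℕ) : ℝ := (volume (Metric.ball (0 : Euc d) 1)).toReal

theorem polya_tiling_boundary_null {d : ℕ} (Ω : Set (Euc d)) (hΩ : IsOpen Ω)
    (hb : Bornology.IsBounded Ω) (T : ℕ → Set (Euc d))
    (hiso : ∀ j, ∃ e : Euc d ≃ᵢ Euc d, T j = e '' Ω)
    (hdisj : Pairwise (Function.onFun Disjoint T))
    (hcover : volume ((⋃ j, T j)ᶜ) = 0) :
    volume (frontier Ω) = 0 := by
  obtain ⟨e, he⟩ := hiso 0
  -- each tile is open
  have hTopen : ∀ j, IsOpen (T j) := by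
    intro j
    obtain ⟨f, hf⟩ := hiso j
    rw [hf]
    exact f.toHomeomorph.isOpenMap Ω hΩ
  -- the frontier of `T 0` is contained in the complement of the union of tiles
  have hsub : frontier (T 0) ⊆ (⋃ j, T j)ᶜ := by
    intro x hx
    simp only [mem_compl_iff, mem_iUnion, not_exists]
    intro j hxj
    rcases eq_or_ne j 0 with rfl | hj
    · rw [(hTopen 0).frontier_eq] at hx
      exact hx.2 hxj
    · have hdj : Disjoint (T 0) (T j) := hdisj (Ne.symm hj)
      have hclos : closure (T 0) ⊆ (T j)ᶜ :=
        closure_minimal (fun y hy => hdj.subset_compl_right hy) (hTopen j).isClosed_compl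
      exact hclos hx.1 hxj
  have hnull : volume (frontier (T 0)) = 0 := measure_mono_null hsub hcover
  -- `frontier (T 0) = e '' frontier Ω`
  have hfront : frontier (T 0) = e '' frontier Ω := by
    rw [he]
    exact (e.toHomeomorph.image_frontier Ω).symm
  rw [hfront] at hnull
  -- `e` is measure preserving (Mazur–Ulam: linear isometry + translation)
  have hme : MeasurePreserving (⇑e) volume volume := by
    have h1 : MeasurePreserving (⇑e.toRealLinearIsometryEquiv) volume volume :=
      e.toRealLinearIsometryEquiv.measurePreserving
    have h2 : MeasurePreserving (fun x : Euc d => x + e 0) volume volume :=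
      measurePreserving_add_right volume (e 0)
    have hcomp : ⇑e = (fun x : Euc d => x + e 0) ∘ ⇑e.toRealLinearIsometryEquiv := by
      funext x
      simp [IsometryEquiv.toRealLinearIsometryEquiv_apply]
    rw [hcomp]
    exact h2.comp h1
  have : volume (e ⁻¹' (e '' frontier Ω)) = 0 :=
    hme.quasiMeasurePreserving.preimage_null hnull
  rwa [Set.preimage_image_eq _ e.injective] at this
end
end

section
/- Let Ω₁ ⊂ Ω₂ be open sets in ℝ^d and suppose there exists a bounded linear extension operator Π : W₂¹(Ω₁) → W₂¹(Ω₂) (i.e. (Πf)|_{Ω₁} = f for all f). Then for all λ > 0, N_N(λ, Ω₁) ≤ N_N(‖Π‖²(λ+1), Ω₂). -/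
open MeasureTheory Real Set
open scoped ENNReal

noncomputable section

theorem neumann_count_le_of_extension {d : ℕ} (Ω₁ Ω₂ : Set (Euc d))
    (h1 : IsOpen Ω₁) (h2 : IsOpen Ω₂) (hsub : Ω₁ ⊆ Ω₂)
    (P : (Euc d → ℝ) →ₗ[ℝ] (Euc d → ℝ)) (C : ℝ) (hC : 0 ≤ C)
    (hext : ∀ f, MemH1 Ω₁ f → MemH1 Ω₂ (P f) ∧ ∀ x ∈ Ω₁, P f x = f x)
    (hnorm : ∀ f, MemH1 Ω₁ f → H1normSq Ω₂ (P f) ≤ C ^ 2 * H1normSq Ω₁ f)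
    (lam : ℝ) (hlam : 0 < lam) :
    NeumannCount Ω₁ lam ≤ NeumannCount Ω₂ (C ^ 2 * (lam + 1)) := by
  rw [NeumannCount]
  apply iSup_le
  rintro ⟨V, hfin, hmem, hray⟩
  haveI : FiniteDimensional ℝ V := hfin
  -- key integral facts
  have hint1 : ∀ f ∈ V, (∫ x in Ω₁, (P f x) ^ 2) = ∫ x in Ω₁, (f x) ^ 2 := by
    intro f hf
    exact setIntegral_congr_fun h1.measurableSet (fun x hx => by
      rw [(hext f (hmem f hf)).2 x hx])
  have key : ∀ f ∈ V, f ≠ 0 →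
      (0 < ∫ x in Ω₂, (P f x) ^ 2) ∧
      (∫ x in Ω₂, ‖fderiv ℝ (P f) x‖ ^ 2) <
        (C ^ 2 * (lam + 1)) * ∫ x in Ω₂, (P f x) ^ 2 := by
    intro f hf hf0
    obtain ⟨ha, hb⟩ := hray f hf hf0
    have hmono : (∫ x in Ω₁, (P f x) ^ 2) ≤ ∫ x in Ω₂, (P f x) ^ 2 :=
      setIntegral_mono_set (hext f (hmem f hf)).1.2.1
        (ae_of_all _ (fun x => sq_nonneg _)) (HasSubset.Subset.eventuallyLE hsub)
    have haA : (∫ x in Ω₁, (f x) ^ 2) ≤ ∫ x in Ω₂, (P f x) ^ 2 := by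
      rw [← hint1 f hf]; exact hmono
    have hB : (0:ℝ) ≤ ∫ x in Ω₂, ‖fderiv ℝ (P f) x‖ ^ 2 :=
      integral_nonneg (fun x => sq_nonneg _)
    have hb0 : (0:ℝ) ≤ ∫ x in Ω₁, ‖fderiv ℝ f x‖ ^ 2 :=
      integral_nonneg (fun x => sq_nonneg _)
    have hn := hnorm f (hmem f hf)
    rw [H1normSq, H1normSq] at hn
    constructor
    · linarith
    · rcases hC.eq_or_lt with hC0 | hC0
      · exfalso
        rw [← hC0] at hn
        norm_num at hn
        linarith
      · have hC2 : 0 < C ^ 2 := by positivity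
        have h3 : C ^ 2 * ((∫ x in Ω₁, (f x) ^ 2) + ∫ x in Ω₁, ‖fderiv ℝ f x‖ ^ 2)
            < C ^ 2 * ((lam + 1) * ∫ x in Ω₁, (f x) ^ 2) :=
          mul_lt_mul_of_pos_left (by nlinarith) hC2
        have h4 : C ^ 2 * (lam + 1) * (∫ x in Ω₁, (f x) ^ 2)
            ≤ C ^ 2 * (lam + 1) * ∫ x in Ω₂, (P f x) ^ 2 :=
          mul_le_mul_of_nonneg_left haA (by positivity)
        nlinarith
  -- the image subspace
  have hinj : Function.Injective (P.comp V.subtype) := by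
    rw [injective_iff_map_eq_zero]
    rintro ⟨f, hf⟩ h0
    simp only [LinearMap.comp_apply, Submodule.subtype_apply] at h0
    by_contra hne
    have hfne : f ≠ 0 := fun h => hne (Subtype.ext h)
    have := (hray f hf hfne).1
    have hz : (∫ x in Ω₁, (f x) ^ 2) = 0 := by
      rw [← hint1 f hf, h0]
      simp
    linarith
  have hrange : LinearMap.range (P.comp V.subtype) = V.map P := by
    rw [LinearMap.range_comp, Submodule.range_subtype]
  have hrank : Module.finrank ℝ (V.map P) = Module.finrank ℝ V := by
    rw [← hrange]; exact LinearMap.finrank_range_of_inj hinj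
  refine le_iSup_of_le ⟨V.map P, ?_, ?_, ?_⟩ ?_
  · exact Module.Finite.map V P
  · rintro g ⟨f, hf, rfl⟩
    exact (hext f (hmem f hf)).1
  · rintro g ⟨f, hf, rfl⟩ hg0
    have hfne : f ≠ 0 := by rintro rfl; simp at hg0
    exact key f hf hfne
  · exact le_of_eq (by rw [hrank])
end
end

section
/- The coordinate-wise reflection map x ↦ x̄ from (-L-R, L+R)^d \ (-L,L)^d into [-L,L]^d \ [-L+R, L-R]^d, defined by (x̄)_j = -2L - x_j if x_j < -L, x_j if |x_j| ≤ L, and 2L - x_j if x_j > L, is measure-preserving on each of the 3^d - 1 congruent pieces, and each point of its range has at most 2^d - 1 preimages; consequently for any nonnegative measurable g on [-L,L]^d, ∫_{(-L-R,L+R)^d \ (-L,L)^d} g(x̄) dx ≤ (2^d - 1) ∫_{(-L,L)^d} g(x) dx. -/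
open MeasureTheory Real Set
open scoped ENNReal

noncomputable section

/-- Coordinate-wise reflection across the faces of the cube `(-L,L)^d`. -/
def cubeReflect {d : ℕ} (L : ℝ) (x : Euc d) : Euc d :=
  WithLp.toLp 2 (fun i => if x i < -L then -2 * L - x i else if x i ≤ L then x i else 2 * L - x i)


/-!
Sort each coordinate by the face of `[-L, L]` beyond which it lies (`0` if inside). This cuts the
shell `(-L-R, L+R)^d \ (-L, L)^d` into pieces indexed by the nonzero sign patterns `s`; on the
piece `s` the reflection is a product of translated coordinate reflections, so it preserves volume
and maps the piece into a box `B_s ⊆ [-L, L]^d`. As `R ≤ L`, the strips `[-L, -L+R)` and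
`(L-R, L]` onto which the two outer slabs of a coordinate fold are disjoint, so a nonzero `s`
with `y ∈ B_s` is determined by its support: at most `2^d - 1` boxes contain `y`. This bounds
every fibre, and summing over the pieces bounds the integral, the boundary of the cube being a
null set.
-/

-- Boundary points of `(-L, L)` count as outside, so the pieces `faceSign L ∘ x = s` with `s ≠ 0`
-- partition the shell exactly.
def faceSign (L t : ℝ) : SignType := if t ≤ -L then -1 else if t < L then 0 else 1

def faceReflect (L : ℝ) : SignType → ℝ → ℝ
  | .neg => fun t => -2 * L - t
  | .zero => id
  | .pos => fun t => 2 * L - t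

def reflectFaces {ι : Type*} (L : ℝ) (s : ι → SignType) (x : ι → ℝ) : ι → ℝ :=
  fun i => faceReflect L (s i) (x i)

def cubeFold {ι : Type*} (L : ℝ) (x : ι → ℝ) : ι → ℝ := reflectFaces L (faceSign L ∘ x) x

def reflectedInterval (L R : ℝ) : SignType → Set ℝ
  | .neg => Ico (-L) (-L + R)
  | .zero => Ioo (-L) L
  | .pos => Ioc (L - R) L

def piCube (ι : Type*) (c : ℝ) : Set (ι → ℝ) := univ.pi fun _ => Ioo (-c) c

def reflectedBox {ι : Type*} (L R : ℝ) (s : ι → SignType) : Set (ι → ℝ) :=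
  univ.pi fun i => reflectedInterval L R (s i)

theorem MeasureTheory.lintegral_biUnion_finset_le {α β : Type*} [MeasurableSpace α]
    {μ : Measure α} (s : Finset β) (t : β → Set α) (f : α → ℝ≥0∞) :
    ∫⁻ a in ⋃ b ∈ s, t b, f a ∂μ ≤ ∑ b ∈ s, ∫⁻ a in t b, f a ∂μ := by
  rw [← Finset.set_biUnion_coe, biUnion_eq_iUnion, ← Finset.sum_coe_sort]
  exact (lintegral_iUnion_le _ _).trans_eq (tsum_fintype _)

section OneDim

variable {L R t : ℝ}

theorem faceSign_eq_zero_iff : faceSign L t = 0 ↔ t ∈ Ioo (-L) L := by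
  unfold faceSign
  split_ifs with h₁ h₂
  · simp only [false_iff, mem_Ioo, not_and, not_lt]; intro; linarith
  · exact iff_of_true rfl ⟨lt_of_not_ge h₁, h₂⟩
  · simp only [false_iff, mem_Ioo, not_and, not_lt]; intro; linarith

theorem faceReflect_injective (L : ℝ) (σ : SignType) : Function.Injective (faceReflect L σ) := by
  cases σ
  exacts [Function.injective_id, sub_right_injective (G := ℝ), sub_right_injective (G := ℝ)]

theorem measurePreserving_faceReflect (L : ℝ) (σ : SignType) :
    MeasurePreserving (faceReflect L σ) volume volume := by
  cases σ
  exacts [.id _, Measure.measurePreserving_sub_left volume _,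
    Measure.measurePreserving_sub_left volume _]

theorem faceReflect_faceSign_mem (ht : t ∈ Ioo (-(L + R)) (L + R)) :
    faceReflect L (faceSign L t) t ∈ reflectedInterval L R (faceSign L t) := by
  obtain ⟨h₁, h₂⟩ := ht
  unfold faceSign
  split_ifs <;> simp [faceReflect, reflectedInterval] <;> constructor <;> linarith

theorem measurableSet_reflectedInterval (σ : SignType) :
    MeasurableSet (reflectedInterval L R σ) := by
  cases σ
  exacts [measurableSet_Ioo, measurableSet_Ico, measurableSet_Ioc]

theorem reflectedInterval_subset_Icc (hRL : R ≤ L) (σ : SignType) :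
    reflectedInterval L R σ ⊆ Icc (-L) L := by
  cases σ <;> intro t ht <;> simp only [reflectedInterval, mem_Ico, mem_Ioo, mem_Ioc] at ht <;>
    constructor <;> linarith

theorem eq_of_mem_reflectedInterval (hRL : R ≤ L) {σ τ : SignType}
    (hσ : t ∈ reflectedInterval L R σ) (hτ : t ∈ reflectedInterval L R τ) (h : σ = 0 ↔ τ = 0) :
    σ = τ := by
  cases σ <;> cases τ <;> simp_all [reflectedInterval] <;> linarith

end OneDim

section Cube

variable {ι : Type*} {L R : ℝ}

theorem faceSign_comp_eq_zero_iff {x : ι → ℝ} :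
    faceSign L ∘ x = 0 ↔ x ∈ piCube ι L := by
  simp only [funext_iff, Function.comp_apply, Pi.zero_apply, faceSign_eq_zero_iff, piCube,
    mem_univ_pi]

theorem reflectFaces_injective (L : ℝ) (s : ι → SignType) :
    Function.Injective (reflectFaces L s) :=
  fun _ _ h => funext fun i => faceReflect_injective L (s i) (congrFun h i)

theorem measurePreserving_reflectFaces [Fintype ι] (L : ℝ) (s : ι → SignType) :
    MeasurePreserving (reflectFaces L s) volume volume :=
  volume_preserving_pi fun i => measurePreserving_faceReflect L (s i)

theorem measurableSet_reflectedBox [Countable ι] (s : ι → SignType) :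
    MeasurableSet (reflectedBox L R s) :=
  .univ_pi fun i => measurableSet_reflectedInterval (s i)

theorem reflectedBox_subset_Icc (hRL : R ≤ L) (s : ι → SignType) :
    reflectedBox L R s ⊆ univ.pi fun _ => Icc (-L) L :=
  pi_mono fun i _ => reflectedInterval_subset_Icc hRL (s i)

theorem cubeFold_mem_reflectedBox {x : ι → ℝ} (hx : x ∈ piCube ι (L + R)) :
    cubeFold L x ∈ reflectedBox L R (faceSign L ∘ x) :=
  fun i _ => faceReflect_faceSign_mem (hx i (mem_univ i))

-- A nonzero sign pattern `s` with `y ∈ reflectedBox L R s` is determined by its support.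
theorem ncard_setOf_mem_reflectedBox_le [Fintype ι] (hRL : R ≤ L) (y : ι → ℝ) :
    {s : ι → SignType | s ≠ 0 ∧ y ∈ reflectedBox L R s}.ncard ≤ 2 ^ Fintype.card ι - 1 := by
  classical
  let supp : (ι → SignType) → Finset ι := fun s => Finset.univ.filter fun i => s i ≠ 0
  have hsupp {s : ι → SignType} {i : ι} : i ∈ supp s ↔ s i ≠ 0 := by simp [supp]
  calc _ ≤ ((Finset.univ : Finset (Finset ι)).erase ∅ : Set (Finset ι)).ncard := by
        refine Set.ncard_le_ncard_of_injOn supp ?_ ?_ (Finset.finite_toSet _)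
        · rintro s ⟨hs, -⟩
          simp only [Finset.coe_erase, Finset.coe_univ, mem_sdiff, mem_univ, mem_singleton_iff,
            true_and, ← Finset.not_nonempty_iff_eq_empty, not_not]
          obtain ⟨i, hi⟩ := Function.ne_iff.mp hs
          exact ⟨i, hsupp.mpr hi⟩
        · rintro s ⟨-, hs⟩ s' ⟨-, hs'⟩ h
          funext i
          refine eq_of_mem_reflectedInterval hRL (hs i (mem_univ i)) (hs' i (mem_univ i)) ?_
          simpa only [hsupp, not_not] using (Finset.ext_iff.mp h i).not
    _ = 2 ^ Fintype.card ι - 1 := by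
        rw [Set.ncard_coe_finset, Finset.card_erase_of_mem (Finset.mem_univ _), Finset.card_univ,
          Fintype.card_finset]

theorem ncard_cubeFold_fiber_le [Fintype ι] (hRL : R ≤ L) (y : ι → ℝ) :
    {x | x ∈ piCube ι (L + R) \ piCube ι L ∧
      cubeFold L x = y}.ncard ≤ 2 ^ Fintype.card ι - 1 := by
  refine (Set.ncard_le_ncard_of_injOn (faceSign L ∘ ·) ?_ ?_ (toFinite _)).trans
    (ncard_setOf_mem_reflectedBox_le hRL y)
  · rintro x ⟨⟨hx, hxL⟩, rfl⟩
    exact ⟨mt faceSign_comp_eq_zero_iff.mp hxL, cubeFold_mem_reflectedBox hx⟩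
  · rintro x ⟨-, hx⟩ x' ⟨-, hx'⟩ (h : faceSign L ∘ x = faceSign L ∘ x')
    refine reflectFaces_injective L (faceSign L ∘ x) ?_
    rw [← hx'] at hx
    simpa only [cubeFold, h] using hx

theorem sum_indicator_reflectedBox_le [Fintype ι] [DecidableEq ι] (hRL : R ≤ L)
    (G : (ι → ℝ) → ℝ≥0∞) (y : ι → ℝ) :
    ∑ s ∈ Finset.univ.erase 0, (reflectedBox L R s).indicator G y
      ≤ (2 ^ Fintype.card ι - 1) * (univ.pi fun _ : ι => Icc (-L) L).indicator G y := by
  classical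
  rw [Finset.sum_indicator_eq_sum_filter, Finset.sum_const, nsmul_eq_mul]
  by_cases hy : y ∈ univ.pi fun _ : ι => Icc (-L) L
  · rw [indicator_of_mem hy]
    gcongr
    calc (((Finset.univ.erase 0).filter fun s => y ∈ reflectedBox L R s).card : ℝ≥0∞)
        = ({s : ι → SignType | s ≠ 0 ∧ y ∈ reflectedBox L R s}.ncard : ℝ≥0∞) := by
          rw [← Set.ncard_coe_finset]; simp [and_comm]
      _ ≤ ((2 ^ Fintype.card ι - 1 : ℕ) : ℝ≥0∞) := by
          gcongr; exact ncard_setOf_mem_reflectedBox_le hRL y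
      _ = 2 ^ Fintype.card ι - 1 := by norm_cast
  · rw [indicator_of_notMem hy, Finset.filter_false_of_mem fun s _ hs =>
      hy (reflectedBox_subset_Icc hRL s hs)]
    simp

theorem setLIntegral_comp_cubeFold_le [Fintype ι] (s : ι → SignType) {G : (ι → ℝ) → ℝ≥0∞}
    (hG : Measurable G) :
    ∫⁻ x in {x | x ∈ piCube ι (L + R) ∧ faceSign L ∘ x = s},
        G (cubeFold L x)
      ≤ ∫⁻ y in reflectedBox L R s, G y := by
  have hT := measurePreserving_reflectFaces (ι := ι) L s
  calc _ ≤ ∫⁻ x in reflectFaces L s ⁻¹' reflectedBox L R s, G (reflectFaces L s x) := by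
        refine (setLIntegral_mono (hG.comp hT.measurable) ?_).trans (lintegral_mono_set ?_)
        · rintro x ⟨-, rfl⟩
          exact le_rfl
        · rintro x ⟨hx, rfl⟩
          exact cubeFold_mem_reflectedBox hx
    _ = _ := hT.setLIntegral_comp_preimage (measurableSet_reflectedBox s) hG

theorem sum_setLIntegral_reflectedBox_le [Fintype ι] [DecidableEq ι] (hRL : R ≤ L)
    {G : (ι → ℝ) → ℝ≥0∞} (hG : Measurable G) :
    ∑ s ∈ Finset.univ.erase 0, ∫⁻ y in reflectedBox L R s, G y
      ≤ (2 ^ Fintype.card ι - 1) * ∫⁻ y in piCube ι L, G y := by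
  have hK : MeasurableSet (univ.pi fun _ : ι => Icc (-L) L) := .univ_pi fun _ => measurableSet_Icc
  calc _ = ∫⁻ y, ∑ s ∈ Finset.univ.erase 0, (reflectedBox L R s).indicator G y := by
        rw [lintegral_finsetSum _ fun s _ => hG.indicator (measurableSet_reflectedBox s)]
        simp only [lintegral_indicator (measurableSet_reflectedBox _)]
    _ ≤ ∫⁻ y, (2 ^ Fintype.card ι - 1) * (univ.pi fun _ : ι => Icc (-L) L).indicator G y :=
        lintegral_mono fun y => sum_indicator_reflectedBox_le hRL G y
    _ = (2 ^ Fintype.card ι - 1) * ∫⁻ y in univ.pi fun _ : ι => Icc (-L) L, G y := by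
        rw [lintegral_const_mul _ (hG.indicator hK), lintegral_indicator hK]
    _ = _ := congrArg _ (setLIntegral_congr Measure.pi_Ioo_ae_eq_pi_Icc.symm)

theorem lintegral_comp_cubeFold_le [Fintype ι] (hRL : R ≤ L) {G : (ι → ℝ) → ℝ≥0∞}
    (hG : Measurable G) :
    ∫⁻ x in piCube ι (L + R) \ piCube ι L,
        G (cubeFold L x)
      ≤ (2 ^ Fintype.card ι - 1) * ∫⁻ y in piCube ι L, G y := by
  classical
  have hcover : piCube ι (L + R) \ piCube ι L
      ⊆ ⋃ s ∈ Finset.univ.erase 0,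
          {x | x ∈ piCube ι (L + R) ∧ faceSign L ∘ x = s} := by
    rintro x ⟨hx, hxL⟩
    refine mem_biUnion (x := faceSign L ∘ x) ?_ ⟨hx, rfl⟩
    exact Finset.mem_erase.mpr ⟨mt faceSign_comp_eq_zero_iff.mp hxL, Finset.mem_univ _⟩
  calc _ ≤ _ := lintegral_mono_set hcover
    _ ≤ _ := lintegral_biUnion_finset_le _ _ _
    _ ≤ _ := Finset.sum_le_sum fun s _ => setLIntegral_comp_cubeFold_le s hG
    _ ≤ _ := sum_setLIntegral_reflectedBox_le hRL hG

end Cube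

theorem cubeReflect_eq_toLp_cubeFold {d : ℕ} {L : ℝ} (hL : 0 ≤ L) (x : Euc d) :
    cubeReflect L x = WithLp.toLp 2 (cubeFold L x.ofLp) := by
  unfold cubeReflect cubeFold reflectFaces faceSign
  congr 1
  funext i
  simp only [Function.comp_apply]
  -- at `x i = ±L` the two definitions take different branches with the same value `x i`
  split_ifs <;> first | rfl | (exfalso; linarith) | (change _ = -2 * L - _; linarith) |
    (change _ = 2 * L - _; linarith)

theorem openCube_eq_preimage (d : ℕ) (c : ℝ) : openCube d c = WithLp.ofLp ⁻¹' piCube (Fin d) c := by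
  ext; simp [openCube, piCube]

theorem setLIntegral_ofLp_preimage {ι : Type*} [Fintype ι] (S : Set (ι → ℝ))
    (F : EuclideanSpace ℝ ι → ℝ≥0∞) :
    ∫⁻ x in WithLp.ofLp ⁻¹' S, F x = ∫⁻ p in S, F (WithLp.toLp 2 p) :=
  ((PiLp.volume_preserving_toLp ι).setLIntegral_comp_preimage_emb
    (MeasurableEquiv.toLp 2 (ι → ℝ)).measurableEmbedding F _).symm

theorem reflection_preimages_and_integral_bound {d : ℕ} (L R : ℝ) (hR : 0 < R) (hRL : R < L)
    (g : Euc d → ℝ≥0∞) (hg : Measurable g) :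
    (∀ y : Euc d,
      ({x : Euc d | x ∈ openCube d (L + R) \ openCube d L ∧ cubeReflect L x = y}).ncard
        ≤ 2 ^ d - 1) ∧
    ∫⁻ x in openCube d (L + R) \ openCube d L, g (cubeReflect L x)
      ≤ ((2 : ℝ≥0∞) ^ d - 1) * ∫⁻ x in openCube d L, g x := by
  have hL : 0 ≤ L := by linarith
  simp only [openCube_eq_preimage, ← preimage_sdiff, cubeReflect_eq_toLp_cubeFold hL]
  refine ⟨fun y => ?_, ?_⟩
  · have hfiber : {x : Euc d | x ∈ WithLp.ofLp ⁻¹' (piCube (Fin d) (L + R) \ piCube (Fin d) L) ∧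
          WithLp.toLp 2 (cubeFold L x.ofLp) = y}
        = WithLp.ofLp ⁻¹' {p | p ∈ piCube (Fin d) (L + R) \ piCube (Fin d) L ∧
          cubeFold L p = y.ofLp} := by
      simp only [WithLp.ext_iff (y := y)]; rfl
    rw [hfiber, Set.ncard_preimage_of_injective_subset_range (WithLp.ofLp_injective 2)
      ((WithLp.ofLp_surjective 2).range_eq ▸ subset_univ _)]
    simpa using ncard_cubeFold_fiber_le hRL.le y.ofLp
  · rw [setLIntegral_ofLp_preimage, setLIntegral_ofLp_preimage]
    have hg' := hg.comp (PiLp.volume_preserving_toLp (Fin d)).measurable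
    simpa using lintegral_comp_cubeFold_le hRL.le hg'
end
end
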